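/- arXiv:1601.06390 — 4 statements merged into one kernel-verified Lean document; each statement's English description precedes it below -/
import Mathlib

section
/- Let u ∈ 𝒜_n^* and i ∈ {1,...,n−1}. If the quasi-Kashiwara operator e_i is defined on u, then the Kashiwara operator ẽ_i is defined on u and ẽ_i(u) = e_i(u). Likewise, if f_i is defined on u, then f̃_i is defined on u and f̃_i(u) = f_i(u). -/
/-!
Common setup: words over the alphabet `𝒜_n = {1,…,n}` (modelled as `List ℕ`),
quasi-Kashiwara operators, the quasi-crystal graph, Kashiwara operators,
quasi-ribbon words, and the hypoplactic congruence.
-/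

namespace HypoCrystal

noncomputable section
open scoped Classical

/-- `u` is a word over the alphabet `𝒜_n = {1,…,n}`. -/
def IsWord (n : ℕ) (u : List ℕ) : Prop := ∀ a ∈ u, 1 ≤ a ∧ a ≤ n

/-- `u` has an `i`-inversion: some letter `i+1` occurs strictly to the left of some letter `i`. -/
def HasInv (i : ℕ) (u : List ℕ) : Prop :=
  ∃ v w x : List ℕ, u = v ++ (i + 1) :: w ++ i :: x

/-- Replace the first (leftmost) occurrence of `a` by `b`, if any; otherwise `none`. -/
def replaceFirst (a b : ℕ) : List ℕ → Option (List ℕ)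
  | [] => none
  | x :: xs => if x = a then some (b :: xs) else (replaceFirst a b xs).map (x :: ·)

/-- The quasi-Kashiwara raising operator `e_i` (partial map, `none` = undefined):
if `u` has an `i`-inversion it is undefined; otherwise it replaces the leftmost
letter `i+1` by `i` (undefined if there is no letter `i+1`). -/
def qe (i : ℕ) (u : List ℕ) : Option (List ℕ) :=
  if HasInv i u then none else replaceFirst (i + 1) i u

/-- The quasi-Kashiwara lowering operator `f_i` (partial map, `none` = undefined):
if `u` has an `i`-inversion it is undefined; otherwise it replaces the rightmost
letter `i` by `i+1` (undefined if there is no letter `i`). -/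
def qf (i : ℕ) (u : List ℕ) : Option (List ℕ) :=
  if HasInv i u then none else (replaceFirst i (i + 1) u.reverse).map List.reverse

/-- Weight of a word: `wt u a` is the number of occurrences of the letter `a` in `u`. -/
def wt (u : List ℕ) : ℕ → ℕ := fun a => u.count a

/-- There is an edge labelled `i` from `u` to `v` in the quasi-crystal graph `Γ(hypo_n)`. -/
def Edge (n i : ℕ) (u v : List ℕ) : Prop := 1 ≤ i ∧ i < n ∧ qf i u = some v

/-- `u` and `v` are adjacent (in the underlying undirected graph) in `Γ(hypo_n)`. -/
def Adj (n : ℕ) (u v : List ℕ) : Prop := ∃ i, Edge n i u v ∨ Edge n i v u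

/-- `v` lies in the connected component `Γ(hypo_n, u)` of `u` in the quasi-crystal graph. -/
def SameComp (n : ℕ) : List ℕ → List ℕ → Prop := Relation.ReflTransGen (Adj n)

/-- `u` is a highest-weight word: no raising operator `e_i` is defined on `u`. -/
def HighestWeight (n : ℕ) (u : List ℕ) : Prop := ∀ i, 1 ≤ i → i < n → qe i u = none

/-- `θ` is a quasi-crystal isomorphism from the component of `u` onto the component of `v`:
a weight-preserving bijection preserving labelled edges in both directions. -/
def IsQCIso (n : ℕ) (u v : List ℕ) (θ : List ℕ → List ℕ) : Prop :=
  Set.BijOn θ {x | SameComp n u x} {y | SameComp n v y} ∧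
  (∀ x, SameComp n u x → wt (θ x) = wt x) ∧
  (∀ x y, SameComp n u x → SameComp n u y → ∀ i, (Edge n i x y ↔ Edge n i (θ x) (θ y)))

/-- `u ∼ v`: there is a quasi-crystal isomorphism between the components of `u` and `v`
taking `u` to `v`. -/
def Sim (n : ℕ) (u v : List ℕ) : Prop :=
  ∃ θ : List ℕ → List ℕ, IsQCIso n u v θ ∧ θ u = v

/-- The standardization of `u`: position `k` receives the rank (starting at 1) of the
pair `(u_k, k)` among all pairs `(u_l, l)` ordered lexicographically. -/
def std (u : List ℕ) : List ℕ :=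
  (List.range u.length).map fun k =>
    1 + ((List.range u.length).filter fun l =>
      u.getD l 0 < u.getD k 0 ∨ (u.getD l 0 = u.getD k 0 ∧ l < k)).length

/-- The maximal strictly decreasing factors of a word (the columns of its
quasi-ribbon tabloid, each read bottom-to-top). -/
def decFactors : List ℕ → List (List ℕ)
  | [] => []
  | a :: rest =>
    match decFactors rest with
    | (b :: f) :: fs => if b < a then (a :: b :: f) :: fs else [a] :: (b :: f) :: fs
    | l => [a] :: l

/-- `w` is a quasi-ribbon word: its quasi-ribbon tabloid is a quasi-ribbon tableau,
i.e. the bottom entry of each column is ≤ the top entry of the next column. -/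
def IsQRWord (w : List ℕ) : Prop :=
  (decFactors w).Chain' fun c d => c.headD 0 ≤ d.getLastD 0

/-- Row lengths (top to bottom) of the ribbon diagram whose column heights
(left to right) are given. -/
def rowLengths : List ℕ → List ℕ
  | [] => []
  | [d] => List.replicate d 1
  | d :: e :: rest =>
    List.replicate (d - 1) 1 ++
      (match rowLengths (e :: rest) with
       | [] => [1]
       | r :: rs => (r + 1) :: rs)

/-- The shape (as a composition, listed top row first) of the quasi-ribbon tabloid of `w`. -/
def shape (w : List ℕ) : List ℕ := rowLengths ((decFactors w).map List.length)

/-- Columns of the quasi-ribbon tableau of shape `α` whose `j`-th row consists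
entirely of symbols `j`, where rows are labelled starting from `j₀`. -/
def hwCols : List ℕ → ℕ → List (List ℕ)
  | [], _ => []
  | [a], j => List.replicate a [j]
  | a :: b :: rest, j =>
    List.replicate (a - 1) [j] ++
      (match hwCols (b :: rest) (j + 1) with
       | [] => [[j]]
       | c :: cs => (c ++ [j]) :: cs)

/-- The column reading of the quasi-ribbon tableau of shape `α` whose `j`-th row
consists entirely of symbols `j`. -/
def hwQR (α : List ℕ) : List ℕ := (hwCols α 1).flatten

/-- The defining relations `R_hypo` of the hypoplactic monoid of rank `n`. -/
inductive HypoRel (n : ℕ) : List ℕ → List ℕ → Prop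
  | knuth1 {a b c : ℕ} : 1 ≤ a → a ≤ b → b < c → c ≤ n → HypoRel n [a, c, b] [c, a, b]
  | knuth2 {a b c : ℕ} : 1 ≤ a → a < b → b ≤ c → c ≤ n → HypoRel n [b, a, c] [b, c, a]
  | quasi1 {a b c d : ℕ} : 1 ≤ a → a ≤ b → b < c → c ≤ d → d ≤ n →
      HypoRel n [c, a, d, b] [a, c, b, d]
  | quasi2 {a b c d : ℕ} : 1 ≤ a → a < b → b ≤ c → c < d → d ≤ n →
      HypoRel n [b, d, a, c] [d, b, c, a]

/-- The hypoplactic congruence `≡_hypo`: the congruence on the free monoid generated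
by the relations `R_hypo`. -/
inductive HypoCong (n : ℕ) : List ℕ → List ℕ → Prop
  | of {u v} : HypoRel n u v → HypoCong n u v
  | refl (u) : HypoCong n u u
  | symm {u v} : HypoCong n u v → HypoCong n v u
  | trans {u v w} : HypoCong n u v → HypoCong n v w → HypoCong n u w
  | append {u v u' v'} : HypoCong n u v → HypoCong n u' v' →
      HypoCong n (u ++ u') (v ++ v')

/-- The signature word of `u` for index `i`: each letter `i` becomes `(position, true)`
(that is, `+`) and each letter `i+1` becomes `(position, false)` (that is, `−`). -/
def signWord (i : ℕ) (u : List ℕ) : List (ℕ × Bool) :=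
  (u.zipIdx.map Prod.swap).filterMap fun pa =>
    if pa.2 = i then some (pa.1, true)
    else if pa.2 = i + 1 then some (pa.1, false) else none

/-- Iteratively delete factors `−+` from a signature word, producing the reduced
word `+^p −^q`. -/
def reduce : List (ℕ × Bool) → List (ℕ × Bool)
  | [] => []
  | x :: rest =>
    match reduce rest with
    | y :: rest' => if x.2 = false ∧ y.2 = true then rest' else x :: y :: rest'
    | [] => [x]

/-- The Kashiwara raising operator `ẽ_i`, computed by the signature rule: change to `i`
the letter `i+1` corresponding to the leftmost `−` of the reduced signature word. -/
def KE (i : ℕ) (u : List ℕ) : Option (List ℕ) :=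
  (((reduce (signWord i u)).filter fun x => !x.2).head?).map fun x => u.set x.1 i

/-- The Kashiwara lowering operator `f̃_i`, computed by the signature rule: change to `i+1`
the letter `i` corresponding to the rightmost `+` of the reduced signature word. -/
def KF (i : ℕ) (u : List ℕ) : Option (List ℕ) :=
  (((reduce (signWord i u)).filter fun x => x.2).getLast?).map fun x => u.set x.1 (i + 1)

/-- The Schützenberger involution on `𝒜_n^*`: reverse the word and replace each
letter `a` by `n − a + 1`. -/
def sharp (n : ℕ) (u : List ℕ) : List ℕ := u.reverse.map fun a => n + 1 - a

/-- The largest letter occurring in `u` (0 for the empty word). -/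
def maxLetter (u : List ℕ) : ℕ := u.foldr max 0

/-- `β` is coarser than `α` (`β ⪯ α`): they have the same weight and every proper
partial sum of `β` is a proper partial sum of `α`. -/
def Coarser (β α : List ℕ) : Prop :=
  β.sum = α.sum ∧ ∀ p < β.length, ∃ m < α.length, (β.take p).sum = (α.take m).sum

end
end HypoCrystal

/-! On an `i`-inversion-free word every letter `i` precedes every letter `i + 1`, so its signature
is already of the form `+^p −^q` and the bracketing deletes nothing. The leftmost `−` and the
rightmost `+` of the reduced signature are then the leftmost `i + 1` and the rightmost `i` of the
word, which are exactly the letters the quasi-Kashiwara operators change. -/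

namespace HypoCrystal

theorem signWord_append (i : ℕ) (u w : List ℕ) :
    signWord i (u ++ w) = signWord i u ++ (signWord i w).map (Prod.map (· + u.length) id) := by
  rw [signWord, signWord, signWord, List.zipIdx_append, Nat.zero_add,
    List.zipIdx_eq_map_add (i := u.length)]
  simp only [List.map_append, List.filterMap_append, List.map_map, List.filterMap_map,
    List.map_filterMap]
  congr 1
  refine List.filterMap_congr fun ⟨a, k⟩ _ => ?_
  simp only [Function.comp_apply, Prod.swap_prod_mk]
  split_ifs <;> simp [Nat.add_comm]

theorem signWord_singleton (i a : ℕ) :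
    signWord i [a] = if a = i then [(0, true)] else if a = i + 1 then [(0, false)] else [] := by
  simp only [signWord, List.zipIdx_singleton, List.map_cons, List.map_nil, Prod.swap_prod_mk]
  split_ifs <;> simp_all

theorem signWord_cons (i a : ℕ) (u : List ℕ) :
    signWord i (a :: u) =
      (if a = i then [(0, true)] else if a = i + 1 then [(0, false)] else []) ++
        (signWord i u).map (Prod.map (· + 1) id) := by
  rw [← List.singleton_append, signWord_append, signWord_singleton]
  rfl

theorem signWord_concat (i a : ℕ) (u : List ℕ) :
    signWord i (u ++ [a]) = signWord i u ++
      (if a = i then [(u.length, true)] else if a = i + 1 then [(u.length, false)] else []) := by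
  rw [signWord_append, signWord_singleton]
  split_ifs <;> simp

theorem getElem?_of_mem_signWord {i : ℕ} {u : List ℕ} {x : ℕ × Bool}
    (hx : x ∈ signWord i u) :
    u[x.1]? = some (if x.2 then i else i + 1) := by
  obtain ⟨⟨k, b⟩, hk, hx⟩ := List.mem_filterMap.mp hx
  obtain ⟨⟨b', k'⟩, hk', hkb⟩ := List.mem_map.mp hk
  cases hkb
  rw [List.mem_zipIdx_iff_getElem?] at hk'
  simp only at hx
  split_ifs at hx with h1 h2 <;> cases hx <;> simp_all

theorem not_hasInv_of_cons {i a : ℕ} {u : List ℕ} (h : ¬HasInv i (a :: u)) : ¬HasInv i u :=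
  fun ⟨v, w, x, hu⟩ => h ⟨a :: v, w, x, by simp [hu]⟩

theorem hasInv_succ_cons {i : ℕ} {u : List ℕ} (h : i ∈ u) : HasInv i ((i + 1) :: u) := by
  obtain ⟨s, t, rfl⟩ := List.append_of_mem h
  exact ⟨[], s, t, by simp⟩

theorem signWord_pairwise_of_not_hasInv {i : ℕ} {u : List ℕ} (h : ¬HasInv i u) :
    (signWord i u).Pairwise fun x y => y.2 ≤ x.2 := by
  induction u with
  | nil => simp [signWord]
  | cons a u ih =>
    rw [signWord_cons, List.pairwise_append, List.pairwise_map]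
    refine ⟨by split_ifs <;> simp, (ih (not_hasInv_of_cons h)).imp id, ?_⟩
    intro x hx _ hy'
    obtain ⟨y, hy, rfl⟩ := List.mem_map.mp hy'
    split_ifs at hx with h1 h2
    · simp_all
    · subst h2
      obtain rfl : x = (0, false) := by simpa using hx
      cases hy2 : y.2
      · simp [hy2]
      · have hyu := getElem?_of_mem_signWord hy
        rw [hy2, if_pos rfl] at hyu
        exact absurd (hasInv_succ_cons (List.mem_of_getElem? hyu)) h
    · simp at hx

-- `y.2 ≤ x.2` for all `x` before `y` says that no `−` (`false`) precedes a `+` (`true`).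
theorem reduce_eq_self_of_pairwise {l : List (ℕ × Bool)}
    (h : l.Pairwise fun x y => y.2 ≤ x.2) :
    reduce l = l := by
  induction l with
  | nil => rfl
  | cons x l ih =>
    rw [List.pairwise_cons] at h
    simp only [reduce, ih h.2]
    cases l with
    | nil => rfl
    | cons y l =>
      have hxy : ¬(x.2 = false ∧ y.2 = true) := fun ⟨hx, hy⟩ =>
        absurd (h.1 y List.mem_cons_self) (by simp [hx, hy])
      simp [hxy]

theorem map_head?_filter_signWord (i : ℕ) (u : List ℕ) :
    (((signWord i u).filter fun x => !x.2).head?).map (fun x => u.set x.1 i) =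
      replaceFirst (i + 1) i u := by
  induction u with
  | nil => rfl
  | cons a u ih =>
    have hshift : ((((signWord i u).map (Prod.map (· + 1) id)).filter fun x => !x.2).head?).map
        (fun x => (a :: u).set x.1 i) = (replaceFirst (i + 1) i u).map (a :: ·) := by
      rw [← ih, List.filter_map, List.head?_map, Option.map_map, Option.map_map]
      rfl
    rw [signWord_cons, replaceFirst]
    by_cases h1 : a = i + 1
    · simp [h1]
    · have hnil : (if a = i then [(0, true)] else if a = i + 1 then [(0, false)] else []).filter
          (fun x : ℕ × Bool => !x.2) = [] := by
        split_ifs <;> simp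
      rw [List.filter_append, hnil, List.nil_append, hshift, if_neg h1]

theorem map_getLast?_filter_signWord (i : ℕ) (u : List ℕ) :
    (((signWord i u).filter fun x => x.2).getLast?).map (fun x => u.set x.1 (i + 1)) =
      (replaceFirst i (i + 1) u.reverse).map List.reverse := by
  induction u using List.reverseRecOn with
  | nil => rfl
  | append_singleton u a ih =>
    rw [signWord_concat, List.reverse_concat, replaceFirst, List.filter_append]
    by_cases h0 : a = i
    · simp [h0]
    · have hnil : (if a = i then [(u.length, true)] else if a = i + 1 then [(u.length, false)]
          else []).filter (fun x : ℕ × Bool => x.2) = [] := by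
        split_ifs <;> simp
      have hset : ∀ x, ((signWord i u).filter fun x => x.2).getLast? = some x →
          (u ++ [a]).set x.1 (i + 1) = u.set x.1 (i + 1) ++ [a] := fun x hx =>
        List.set_append_left _ _ (List.getElem?_eq_some_iff.mp
          (getElem?_of_mem_signWord (List.mem_filter.mp (List.mem_of_getLast? hx)).1)).1
      rw [hnil, List.append_nil, Option.map_congr hset, if_neg h0, Option.map_map]
      simpa [Option.map_map, Function.comp_def] using congrArg (Option.map (· ++ [a])) ih

theorem KE_eq_qe {i : ℕ} {u : List ℕ} (h : ¬HasInv i u) : KE i u = qe i u := by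
  rw [KE, qe, if_neg h, reduce_eq_self_of_pairwise (signWord_pairwise_of_not_hasInv h),
    map_head?_filter_signWord]

theorem KF_eq_qf {i : ℕ} {u : List ℕ} (h : ¬HasInv i u) : KF i u = qf i u := by
  rw [KF, qf, if_neg h, reduce_eq_self_of_pairwise (signWord_pairwise_of_not_hasInv h),
    map_getLast?_filter_signWord]

theorem quasiKashiwara_restriction_of_Kashiwara_general (u : List ℕ) (i : ℕ) :
    (∀ v, qe i u = some v → KE i u = some v) ∧
    (∀ v, qf i u = some v → KF i u = some v) := by
  refine ⟨fun v hv => ?_, fun v hv => ?_⟩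
  · have h : ¬HasInv i u := fun h => by simp [qe, h] at hv
    rwa [KE_eq_qe h]
  · have h : ¬HasInv i u := fun h => by simp [qf, h] at hv
    rwa [KF_eq_qf h]

/-- Let `u ∈ 𝒜_n^*` and `i ∈ {1,…,n−1}`. If the quasi-Kashiwara operator
`e_i` is defined on `u`, then the Kashiwara operator `ẽ_i` is defined on `u` and
`ẽ_i(u) = e_i(u)`; likewise for `f_i` and `f̃_i`. -/
theorem quasiKashiwara_restriction_of_Kashiwara (n : ℕ) (u : List ℕ) (hu : IsWord n u)
    (i : ℕ) (hi1 : 1 ≤ i) (hi2 : i < n) :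
    (∀ v, qe i u = some v → KE i u = some v) ∧
    (∀ v, qf i u = some v → KF i u = some v) :=
  quasiKashiwara_restriction_of_Kashiwara_general u i

end HypoCrystal
end

section
/- The relation ∼ is a congruence on the free monoid 𝒜_n^*: it is an equivalence relation, and whenever u ∼ v and u' ∼ v', one has uu' ∼ vv'. -/
/-!
Identity maps, inverses and composites of quasi-crystal isomorphisms are again such
isomorphisms, which makes `∼` an equivalence. For the concatenation, an `i`-edge out of `x x'`
changes only the left factor (possible when `i ∉ x'`) or only the right one (when `i + 1 ∉ x`).
Isomorphisms preserve weights, hence which letters occur, so if `θ u = v` and `θ' u' = v'`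
then the map acting by `θ` on the first `|u|` letters and by `θ'` on the rest preserves edges
in both directions. It therefore sends the component of `u u'` into that of `v v'`, and the
same construction applied to the inverses of `θ` and `θ'` gives its inverse.
-/

namespace HypoCrystal

lemma replaceFirst_eq_none {a b : ℕ} {l : List ℕ} (h : a ∉ l) :
    replaceFirst a b l = none := by
  induction l with
  | nil => rfl
  | cons x xs ih =>
    simp only [List.mem_cons, not_or] at h
    simp [replaceFirst, Ne.symm h.1, ih h.2]

lemma mem_of_replaceFirst_eq_some {a b : ℕ} {l l' : List ℕ}
    (h : replaceFirst a b l = some l') : a ∈ l := by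
  by_contra hm
  simp [replaceFirst_eq_none hm] at h

lemma length_of_replaceFirst_eq_some {a b : ℕ} {l l' : List ℕ}
    (h : replaceFirst a b l = some l') : l'.length = l.length := by
  induction l generalizing l' with
  | nil => simp [replaceFirst] at h
  | cons x xs ih =>
    unfold replaceFirst at h
    split_ifs at h
    · cases h; rfl
    · obtain ⟨m, hm, rfl⟩ := Option.map_eq_some_iff.mp h
      simp [ih hm]

lemma replaceFirst_append_of_mem {a b : ℕ} {l : List ℕ} (m : List ℕ) (h : a ∈ l) :
    replaceFirst a b (l ++ m) = (replaceFirst a b l).map (· ++ m) := by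
  induction l with
  | nil => simp at h
  | cons x xs ih =>
    by_cases hx : x = a
    · simp [replaceFirst, hx]
    · have hxs : a ∈ xs := (List.mem_cons.mp h).resolve_left (Ne.symm hx)
      simp only [List.cons_append, replaceFirst, if_neg hx, ih hxs, Option.map_map]
      rfl

lemma replaceFirst_append_of_notMem {a b : ℕ} {l : List ℕ} (m : List ℕ) (h : a ∉ l) :
    replaceFirst a b (l ++ m) = (replaceFirst a b m).map (l ++ ·) := by
  induction l with
  | nil => simp
  | cons x xs ih =>
    simp only [List.mem_cons, not_or] at h
    simp only [List.cons_append, replaceFirst, if_neg (Ne.symm h.1), ih h.2, Option.map_map]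
    rfl

lemma hasInv_cons {i a : ℕ} {t : List ℕ} :
    HasInv i (a :: t) ↔ (a = i + 1 ∧ i ∈ t) ∨ HasInv i t := by
  constructor
  · rintro ⟨_ | ⟨c, v⟩, w, x, h⟩ <;> simp only [List.nil_append, List.cons_append,
      List.cons.injEq] at h
    · exact Or.inl ⟨h.1, by simp [h.2]⟩
    · exact Or.inr ⟨v, w, x, h.2⟩
  · rintro (⟨rfl, hm⟩ | ⟨v, w, x, rfl⟩)
    · obtain ⟨s, t', rfl⟩ := List.append_of_mem hm
      exact ⟨[], s, t', rfl⟩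
    · exact ⟨a :: v, w, x, rfl⟩

lemma hasInv_append {i : ℕ} {x y : List ℕ} :
    HasInv i (x ++ y) ↔ HasInv i x ∨ HasInv i y ∨ (i + 1 ∈ x ∧ i ∈ y) := by
  induction x with
  | nil => simp [HasInv]
  | cons a xs ih =>
    simp only [List.cons_append, hasInv_cons, ih, List.mem_append, List.mem_cons]
    tauto

lemma mem_of_hasInv {i : ℕ} {u : List ℕ} (h : HasInv i u) : i + 1 ∈ u ∧ i ∈ u := by
  obtain ⟨v, w, x, rfl⟩ := h
  simp

lemma mem_of_qf_eq_some {i : ℕ} {u y : List ℕ} (h : qf i u = some y) : i ∈ u := by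
  unfold qf at h
  split_ifs at h
  obtain ⟨m, hm, rfl⟩ := Option.map_eq_some_iff.mp h
  exact List.mem_reverse.mp (mem_of_replaceFirst_eq_some hm)

lemma length_of_qf_eq_some {i : ℕ} {u y : List ℕ} (h : qf i u = some y) :
    y.length = u.length := by
  unfold qf at h
  split_ifs at h
  obtain ⟨m, hm, rfl⟩ := Option.map_eq_some_iff.mp h
  simpa using length_of_replaceFirst_eq_some hm

lemma qf_append_of_notMem_right {i : ℕ} {x x' : List ℕ} (h : i ∉ x') :
    qf i (x ++ x') = (qf i x).map (· ++ x') := by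
  have hinv : HasInv i (x ++ x') ↔ HasInv i x := by
    have := fun h' : HasInv i x' => h (mem_of_hasInv h').2
    rw [hasInv_append]
    tauto
  unfold qf
  split_ifs with h₁ h₂ h₂
  · rfl
  · exact absurd (hinv.mp h₁) h₂
  · exact absurd (hinv.mpr h₂) h₁
  · rw [List.reverse_append,
      replaceFirst_append_of_notMem _ (fun hc => h (List.mem_reverse.mp hc))]
    cases replaceFirst i (i + 1) x.reverse <;> simp

lemma qf_append_of_notMem_left {i : ℕ} {x x' : List ℕ} (h : i ∈ x') (h' : i + 1 ∉ x) :
    qf i (x ++ x') = (qf i x').map (x ++ ·) := by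
  have hinv : HasInv i (x ++ x') ↔ HasInv i x' := by
    have := fun h'' : HasInv i x => h' (mem_of_hasInv h'').1
    rw [hasInv_append]
    tauto
  unfold qf
  split_ifs with h₁ h₂ h₂
  · rfl
  · exact absurd (hinv.mp h₁) h₂
  · exact absurd (hinv.mpr h₂) h₁
  · rw [List.reverse_append, replaceFirst_append_of_mem _ (List.mem_reverse.mpr h)]
    cases replaceFirst i (i + 1) x'.reverse <;> simp

lemma qf_append_eq_none {i : ℕ} {x x' : List ℕ} (h : i ∈ x') (h' : i + 1 ∈ x) :
    qf i (x ++ x') = none :=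
  if_pos (hasInv_append.mpr (Or.inr (Or.inr ⟨h', h⟩)))

lemma append_eq_append_iff_of_length_eq {α : Type*} {x x' y y' : List α}
    (h : x.length = y.length) : x ++ x' = y ++ y' ↔ x = y ∧ x' = y' :=
  ⟨fun he => List.append_inj he h, by rintro ⟨rfl, rfl⟩; rfl⟩

lemma edge_append_append_iff {n i : ℕ} {x x' y y' : List ℕ} (h : x.length = y.length) :
    Edge n i (x ++ x') (y ++ y') ↔
      (Edge n i x y ∧ x' = y' ∧ i ∉ x') ∨ (x = y ∧ Edge n i x' y' ∧ i + 1 ∉ x) := by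
  unfold Edge
  by_cases hx' : i ∈ x'
  · by_cases hx : i + 1 ∈ x
    · simp [qf_append_eq_none hx' hx, hx, hx']
    · simp only [qf_append_of_notMem_left hx' hx, Option.map_eq_some_iff,
        append_eq_append_iff_of_length_eq h]
      aesop
  · have hlen {z : List ℕ} (hz : qf i x = some z) : z.length = y.length :=
      (length_of_qf_eq_some hz).trans h
    simp only [qf_append_of_notMem_right hx', Option.map_eq_some_iff]
    constructor
    · rintro ⟨h1, h2, z, hz, he⟩
      obtain ⟨rfl, rfl⟩ := append_eq_append_iff_of_length_eq (hlen hz) |>.mp he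
      exact Or.inl ⟨⟨h1, h2, hz⟩, rfl, hx'⟩
    · rintro (⟨⟨h1, h2, hz⟩, rfl, -⟩ | ⟨-, ⟨-, -, hz⟩, -⟩)
      · exact ⟨h1, h2, y, hz, rfl⟩
      · exact absurd (mem_of_qf_eq_some hz) hx'


section Components

variable {n : ℕ}

lemma length_eq_of_adj {x y : List ℕ} (h : Adj n x y) : y.length = x.length := by
  obtain ⟨i, he | he⟩ := h
  · exact length_of_qf_eq_some he.2.2
  · exact (length_of_qf_eq_some he.2.2).symm

lemma length_eq_of_sameComp {x y : List ℕ} (h : SameComp n x y) : y.length = x.length := by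
  induction h with
  | refl => rfl
  | tail _ hadj ih => exact (length_eq_of_adj hadj).trans ih

lemma adj_append_append {x x' y y' : List ℕ} (h : x.length = y.length)
    (hadj : Adj n (x ++ x') (y ++ y')) : (Adj n x y ∧ x' = y') ∨ (x = y ∧ Adj n x' y') := by
  obtain ⟨i, he | he⟩ := hadj
  · rcases (edge_append_append_iff h).mp he with ⟨he₁, rfl, -⟩ | ⟨rfl, he₂, -⟩
    · exact Or.inl ⟨⟨i, Or.inl he₁⟩, rfl⟩
    · exact Or.inr ⟨rfl, i, Or.inl he₂⟩
  · rcases (edge_append_append_iff h.symm).mp he with ⟨he₁, rfl, -⟩ | ⟨rfl, he₂, -⟩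
    · exact Or.inl ⟨⟨i, Or.inr he₁⟩, rfl⟩
    · exact Or.inr ⟨rfl, i, Or.inr he₂⟩

lemma sameComp_take_drop {u u' w : List ℕ} (h : SameComp n (u ++ u') w) :
    SameComp n u (w.take u.length) ∧ SameComp n u' (w.drop u.length) := by
  induction h with
  | refl =>
    rw [List.take_left, List.drop_left]
    exact ⟨.refl, .refl⟩
  | @tail b c _ hadj ih =>
    have hlen : (b.take u.length).length = (c.take u.length).length := by
      simp [length_eq_of_adj hadj]
    rw [← List.take_append_drop u.length b, ← List.take_append_drop u.length c] at hadj
    rcases adj_append_append hlen hadj with ⟨hadj, heq⟩ | ⟨heq, hadj⟩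
    · exact ⟨ih.1.tail hadj, heq ▸ ih.2⟩
    · exact ⟨heq ▸ ih.1, ih.2.tail hadj⟩

end Components

def appendMap (k : ℕ) (θ θ' : List ℕ → List ℕ) (w : List ℕ) : List ℕ :=
  θ (w.take k) ++ θ' (w.drop k)

namespace IsQCIso

variable {n : ℕ} {u v u' v' : List ℕ} {θ θ' : List ℕ → List ℕ}

lemma id : IsQCIso n u u id :=
  ⟨Set.bijOn_id _, fun _ _ => rfl, fun _ _ _ _ _ => Iff.rfl⟩

lemma comp {w : List ℕ} {η : List ℕ → List ℕ} (hη : IsQCIso n v w η)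
    (hθ : IsQCIso n u v θ) :
    IsQCIso n u w (η ∘ θ) := by
  refine ⟨hη.1.comp hθ.1, fun x hx => ?_, fun x y hx hy i => ?_⟩
  · rw [Function.comp_apply, hη.2.1 _ (hθ.1.mapsTo hx), hθ.2.1 x hx]
  · rw [hθ.2.2 x y hx hy, hη.2.2 _ _ (hθ.1.mapsTo hx) (hθ.1.mapsTo hy)]
    rfl

lemma symm (hθ : IsQCIso n u v θ) :
    IsQCIso n v u (Function.invFunOn θ {x | SameComp n u x}) := by
  have hinv := hθ.1.invOn_invFunOn
  have hmaps := hθ.1.surjOn.mapsTo_invFunOn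
  refine ⟨hθ.1.symm hinv.symm, fun y hy => ?_, fun x y hx hy i => ?_⟩
  · rw [← hθ.2.1 _ (hmaps hy), hinv.2 hy]
  · rw [hθ.2.2 _ _ (hmaps hx) (hmaps hy), hinv.2 hx, hinv.2 hy]

lemma length_apply (hθ : IsQCIso n u v θ) {x : List ℕ} (hx : SameComp n u x) :
    (θ x).length = v.length :=
  length_eq_of_sameComp (hθ.1.mapsTo hx)

lemma count_apply (hθ : IsQCIso n u v θ) {x : List ℕ} (hx : SameComp n u x) (a : ℕ) :
    (θ x).count a = x.count a :=
  congrFun (hθ.2.1 x hx) a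

lemma mem_apply_iff (hθ : IsQCIso n u v θ) {x : List ℕ} (hx : SameComp n u x) (a : ℕ) :
    a ∈ θ x ↔ a ∈ x := by
  rw [← List.count_pos_iff, ← List.count_pos_iff, hθ.count_apply hx]

lemma wt_appendMap (hθ : IsQCIso n u v θ) (hθ' : IsQCIso n u' v' θ') {w : List ℕ}
    (hw : SameComp n (u ++ u') w) : wt (appendMap u.length θ θ' w) = wt w := by
  obtain ⟨h, h'⟩ := sameComp_take_drop hw
  funext a
  conv_rhs => rw [wt, ← List.take_append_drop u.length w]
  simp only [wt, appendMap, List.count_append, hθ.count_apply h, hθ'.count_apply h']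

lemma edge_appendMap_iff (hθ : IsQCIso n u v θ) (hθ' : IsQCIso n u' v' θ') {x y : List ℕ}
    (hx : SameComp n (u ++ u') x) (hy : SameComp n (u ++ u') y) (i : ℕ) :
    Edge n i x y ↔ Edge n i (appendMap u.length θ θ' x) (appendMap u.length θ θ' y) := by
  obtain ⟨hx₁, hx₂⟩ := sameComp_take_drop hx
  obtain ⟨hy₁, hy₂⟩ := sameComp_take_drop hy
  have hlen : (x.take u.length).length = (y.take u.length).length := by
    simp [length_eq_of_sameComp hx, length_eq_of_sameComp hy]
  rw [← List.take_append_drop u.length x, ← List.take_append_drop u.length y,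
    edge_append_append_iff hlen, appendMap, appendMap, List.take_append_drop,
    List.take_append_drop,
    edge_append_append_iff ((hθ.length_apply hx₁).trans (hθ.length_apply hy₁).symm),
    hθ.2.2 _ _ hx₁ hy₁, hθ'.2.2 _ _ hx₂ hy₂, hθ.1.injOn.eq_iff hx₁ hy₁,
    hθ'.1.injOn.eq_iff hx₂ hy₂, hθ.mem_apply_iff hx₁, hθ'.mem_apply_iff hx₂]

lemma mapsTo_appendMap (hθ : IsQCIso n u v θ) (hθ' : IsQCIso n u' v' θ') (hv : θ u = v)
    (hv' : θ' u' = v') :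
    Set.MapsTo (appendMap u.length θ θ') {w | SameComp n (u ++ u') w}
      {w | SameComp n (v ++ v') w} := by
  intro w hw
  induction hw with
  | refl =>
    rw [appendMap, List.take_left, List.drop_left, hv, hv']
    exact .refl
  | @tail b c hb hadj ih =>
    have hc : SameComp n (u ++ u') c := hb.tail hadj
    obtain ⟨i, he | he⟩ := hadj
    · exact ih.tail ⟨i, Or.inl ((hθ.edge_appendMap_iff hθ' hb hc i).mp he)⟩
    · exact ih.tail ⟨i, Or.inr ((hθ.edge_appendMap_iff hθ' hc hb i).mp he)⟩

lemma leftInvOn_appendMap (hθ : IsQCIso n u v θ) {σ σ' : List ℕ → List ℕ}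
    (hσ : Set.LeftInvOn σ θ {x | SameComp n u x})
    (hσ' : Set.LeftInvOn σ' θ' {x | SameComp n u' x}) :
    Set.LeftInvOn (appendMap v.length σ σ') (appendMap u.length θ θ')
      {w | SameComp n (u ++ u') w} := by
  intro w hw
  obtain ⟨h, h'⟩ := sameComp_take_drop hw
  have hlen := hθ.length_apply h
  simp only [appendMap, List.take_left' hlen, List.drop_left' hlen, hσ h, hσ' h',
    List.take_append_drop]

lemma append (hθ : IsQCIso n u v θ) (hθ' : IsQCIso n u' v' θ') (hv : θ u = v)
    (hv' : θ' u' = v') : IsQCIso n (u ++ u') (v ++ v') (appendMap u.length θ θ') := by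
  have hinv := hθ.1.invOn_invFunOn
  have hinv' := hθ'.1.invOn_invFunOn
  subst hv hv'
  have hbij : Set.BijOn (appendMap u.length θ θ') {w | SameComp n (u ++ u') w}
      {w | SameComp n (θ u ++ θ' u') w} :=
    Set.InvOn.bijOn
      ⟨hθ.leftInvOn_appendMap hinv.1 hinv'.1, hθ.symm.leftInvOn_appendMap hinv.2 hinv'.2⟩
      (hθ.mapsTo_appendMap hθ' rfl rfl)
      (hθ.symm.mapsTo_appendMap hθ'.symm (hinv.1 .refl) (hinv'.1 .refl))
  exact ⟨hbij, fun _ => hθ.wt_appendMap hθ',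
    fun _ _ hx hy => hθ.edge_appendMap_iff hθ' hx hy⟩

end IsQCIso

namespace Sim

variable {n : ℕ} {u v w u' v' : List ℕ}

lemma refl (u : List ℕ) : Sim n u u := ⟨id, IsQCIso.id, rfl⟩

lemma symm : Sim n u v → Sim n v u := by
  rintro ⟨θ, hθ, rfl⟩
  exact ⟨_, hθ.symm, hθ.1.invOn_invFunOn.1 Relation.ReflTransGen.refl⟩

lemma trans : Sim n u v → Sim n v w → Sim n u w := by
  rintro ⟨θ, hθ, rfl⟩ ⟨η, hη, rfl⟩
  exact ⟨η ∘ θ, hη.comp hθ, rfl⟩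

lemma append : Sim n u v → Sim n u' v' → Sim n (u ++ u') (v ++ v') := by
  rintro ⟨θ, hθ, rfl⟩ ⟨θ', hθ', rfl⟩
  exact ⟨_, hθ.append hθ' rfl rfl, by simp [appendMap]⟩

end Sim

/-- The relation `∼` is a congruence on the free monoid `𝒜_n^*`:
it is reflexive, symmetric, and transitive on `𝒜_n^*`, and whenever `u ∼ v` and
`u' ∼ v'` one has `uu' ∼ vv'`. -/
theorem sim_is_congruence (n : ℕ) :
    (∀ u, IsWord n u → Sim n u u) ∧
    (∀ u v, IsWord n u → IsWord n v → Sim n u v → Sim n v u) ∧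
    (∀ u v w, IsWord n u → IsWord n v → IsWord n w →
      Sim n u v → Sim n v w → Sim n u w) ∧
    (∀ u v u' v', IsWord n u → IsWord n v → IsWord n u' → IsWord n v' →
      Sim n u v → Sim n u' v' → Sim n (u ++ u') (v ++ v')) :=
  ⟨fun u _ => Sim.refl u, fun _ _ _ _ => Sim.symm, fun _ _ _ _ _ _ => Sim.trans,
    fun _ _ _ _ _ _ _ _ => Sim.append⟩

end HypoCrystal
end

section
/- If u ∈ 𝒜_n^* is a quasi-ribbon word, then every word in the connected component Γ(hypo_n, u) of the quasi-crystal graph is a quasi-ribbon word, and every such word has the same shape as u. -/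
/-!
When `f_i` is defined on `x`, it changes the rightmost `i` into `i + 1`; as `x` has no
`i`-inversion, every letter to its left differs from `i + 1`, and every letter to its right
differs from `i`. Hence, comparing positions lexicographically by (letter, position), `x` and
`f_i x` induce the same order on positions: they have the same standardization. The maximal
strictly decreasing factors (the columns of the quasi-ribbon tabloid) and the inequalities between
the bottom of one column and the top of the next only depend on this order, so being a
quasi-ribbon word and the shape are invariants of every edge of `Γ(hypo_n)`.
-/

theorem List.isChain_iff_of_pairwise {α : Type*} {R S T : α → α → Prop} {l : List α}
    (hl : l.Pairwise T) (hT : ∀ a b, T a b → (R a b ↔ S a b)) : l.IsChain R ↔ l.IsChain S := by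
  induction l with
  | nil => simp
  | cons a l ih =>
    cases l with
    | nil => simp
    | cons b l =>
      rw [isChain_cons_cons, isChain_cons_cons, hT a b (rel_of_pairwise_cons hl mem_cons_self),
        ih hl.of_cons]

namespace HypoCrystal

open List

/-- The words `zs.map Prod.fst` and `zs.map Prod.snd` have the same standardization exactly when
`zs` is pairwise `ComparesAlike`. -/
def ComparesAlike (p q : ℕ × ℕ) : Prop := p.1 ≤ q.1 ↔ p.2 ≤ q.2

theorem decFactors_map_fst_snd {zs : List (ℕ × ℕ)} (h : zs.Pairwise ComparesAlike) :
    ∃ Z : List (List (ℕ × ℕ)), (∀ c ∈ Z, c ≠ []) ∧ Z.flatten = zs ∧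
      decFactors (zs.map Prod.fst) = Z.map (map Prod.fst) ∧
      decFactors (zs.map Prod.snd) = Z.map (map Prod.snd) := by
  induction zs with
  | nil => exact ⟨[], by simp, rfl, rfl, rfl⟩
  | cons p zs ih =>
    obtain ⟨Z, hne, rfl, h₁, h₂⟩ := ih h.of_cons
    rcases Z with _ | ⟨c, Z⟩
    · exact ⟨[[p]], by simp, rfl, by rw [map_cons, decFactors, h₁]; rfl,
        by rw [map_cons, decFactors, h₂]; rfl⟩
    obtain ⟨q, c, rfl⟩ := exists_cons_of_ne_nil (hne _ mem_cons_self)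
    have hpq : q.1 < p.1 ↔ q.2 < p.2 := by
      have := rel_of_pairwise_cons h (by simp : q ∈ ((q :: c) :: Z).flatten)
      rw [ComparesAlike] at this
      omega
    by_cases hlt : q.1 < p.1
    · refine ⟨(p :: q :: c) :: Z, by simp_all, rfl, ?_, ?_⟩
      · rw [map_cons, decFactors, h₁]; simp [hlt]
      · rw [map_cons, decFactors, h₂]; simp [hpq.mp hlt]
    · refine ⟨[p] :: (q :: c) :: Z, by simp_all, rfl, ?_, ?_⟩
      · rw [map_cons, decFactors, h₁]; simp [hlt]
      · rw [map_cons, decFactors, h₂]; simp [hpq.not.mp hlt]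

theorem isQRWord_map_fst_iff {zs : List (ℕ × ℕ)} (h : zs.Pairwise ComparesAlike) :
    IsQRWord (zs.map Prod.fst) ↔ IsQRWord (zs.map Prod.snd) := by
  obtain ⟨Z, hne, rfl, h₁, h₂⟩ := decFactors_map_fst_snd h
  have hZ : Z.Pairwise fun c d => c ≠ [] ∧ d ≠ [] ∧ ∀ x ∈ c, ∀ y ∈ d, ComparesAlike x y :=
    (pairwise_flatten.mp h).2.imp_of_mem fun hc hd hcd => ⟨hne _ hc, hne _ hd, hcd⟩
  show List.IsChain _ _ ↔ List.IsChain _ _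
  rw [h₁, h₂, isChain_map, isChain_map]
  refine isChain_iff_of_pairwise hZ ?_
  rintro c d ⟨hc, hd, hcd⟩
  obtain ⟨q, c, rfl⟩ := exists_cons_of_ne_nil hc
  simpa [ComparesAlike, getLastD_eq_getLast?, getLast?_eq_some_getLast hd] using
    hcd q mem_cons_self (d.getLast hd) (getLast_mem hd)

theorem shape_map_fst_eq {zs : List (ℕ × ℕ)} (h : zs.Pairwise ComparesAlike) :
    shape (zs.map Prod.fst) = shape (zs.map Prod.snd) := by
  obtain ⟨Z, -, -, h₁, h₂⟩ := decFactors_map_fst_snd h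
  simp [shape, h₁, h₂, Function.comp_def]

theorem replaceFirst_eq_some {a b : ℕ} {l r : List ℕ} (h : replaceFirst a b l = some r) :
    ∃ p s, l = p ++ a :: s ∧ r = p ++ b :: s ∧ a ∉ p := by
  induction l generalizing r with
  | nil => simp [replaceFirst] at h
  | cons x l ih =>
    rw [replaceFirst] at h
    split_ifs at h with hx
    · exact ⟨[], l, by simp [hx], by simp [← Option.some_inj.mp h], by simp⟩
    · obtain ⟨r, hr, rfl⟩ := Option.map_eq_some_iff.mp h
      obtain ⟨p, s, rfl, rfl, hp⟩ := ih hr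
      exact ⟨x :: p, s, rfl, rfl, by simp [hp, Ne.symm hx]⟩

theorem exists_eq_append_of_qf_eq_some {i : ℕ} {x y : List ℕ} (h : qf i x = some y) :
    ∃ P S, x = P ++ i :: S ∧ y = P ++ (i + 1) :: S ∧ i + 1 ∉ P ∧ i ∉ S := by
  rw [qf] at h
  split_ifs at h with hinv
  obtain ⟨r, hr, rfl⟩ := Option.map_eq_some_iff.mp h
  obtain ⟨p, s, hx, rfl, hp⟩ := replaceFirst_eq_some hr
  rw [← reverse_reverse x, hx]
  refine ⟨s.reverse, p.reverse, by simp, by simp, fun hs => ?_, by simpa using hp⟩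
  obtain ⟨v, w, hvw⟩ := append_of_mem hs
  exact hinv ⟨v, w, p.reverse, by rw [← reverse_reverse x, hx]; simp [hvw]⟩

theorem exists_pairwise_comparesAlike_of_qf_eq_some {i : ℕ} {x y : List ℕ}
    (h : qf i x = some y) :
    ∃ zs : List (ℕ × ℕ),
      zs.Pairwise ComparesAlike ∧ x = zs.map Prod.fst ∧ y = zs.map Prod.snd := by
  obtain ⟨P, S, rfl, rfl, hP, hS⟩ := exists_eq_append_of_qf_eq_some h
  let diag : ℕ → ℕ × ℕ := fun a => (a, a)
  refine ⟨P.map diag ++ (i, i + 1) :: S.map diag, ?_, by simp [diag, Function.comp_def],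
    by simp [diag, Function.comp_def]⟩
  simp only [pairwise_append, pairwise_cons, pairwise_map, mem_cons, mem_map, diag, ComparesAlike]
  refine ⟨pairwise_of_forall (by simp), ⟨?_, pairwise_of_forall (by simp)⟩, ?_⟩
  · rintro _ ⟨a, ha, rfl⟩
    have : a ≠ i := fun hai => hS (hai ▸ ha)
    omega
  · rintro _ ⟨a, ha, rfl⟩ _ (rfl | ⟨b, -, rfl⟩)
    · have : a ≠ i + 1 := fun hai => hP (hai ▸ ha)
      omega
    · simp

theorem isQRWord_iff_of_qf_eq_some {i : ℕ} {x y : List ℕ} (h : qf i x = some y) :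
    IsQRWord x ↔ IsQRWord y := by
  obtain ⟨zs, hzs, rfl, rfl⟩ := exists_pairwise_comparesAlike_of_qf_eq_some h
  exact isQRWord_map_fst_iff hzs

theorem shape_eq_of_qf_eq_some {i : ℕ} {x y : List ℕ} (h : qf i x = some y) :
    shape x = shape y := by
  obtain ⟨zs, hzs, rfl, rfl⟩ := exists_pairwise_comparesAlike_of_qf_eq_some h
  exact shape_map_fst_eq hzs

theorem component_of_quasiRibbon_word_general (n : ℕ) (u : List ℕ)
    (hq : IsQRWord u) :
    ∀ w, SameComp n u w → IsQRWord w ∧ shape w = shape u := by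
  intro w h
  induction h with
  | refl => exact ⟨hq, rfl⟩
  | tail _ hadj ih =>
    obtain ⟨i, ⟨-, -, hf⟩ | ⟨-, -, hf⟩⟩ := hadj
    · exact ⟨(isQRWord_iff_of_qf_eq_some hf).mp ih.1,
        (shape_eq_of_qf_eq_some hf).symm.trans ih.2⟩
    · exact ⟨(isQRWord_iff_of_qf_eq_some hf).mpr ih.1,
        (shape_eq_of_qf_eq_some hf).trans ih.2⟩

/-- If `u ∈ 𝒜_n^*` is a quasi-ribbon word, then every word in the
connected component `Γ(hypo_n, u)` of the quasi-crystal graph is a quasi-ribbon word,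
and every such word has the same shape as `u`. -/
theorem component_of_quasiRibbon_word (n : ℕ) (u : List ℕ) (hu : IsWord n u)
    (hq : IsQRWord u) :
    ∀ w, SameComp n u w → IsQRWord w ∧ shape w = shape u :=
  component_of_quasiRibbon_word_general n u hq

end HypoCrystal
end

section
/- A word u ∈ 𝒜_n^* is highest-weight (i.e., e_i(u) is undefined for all i ∈ {1,...,n−1}) if and only if u contains every symbol of {1,...,max(u)} and u has an i-inversion for every i ∈ {1,...,max(u)−1}, where max(u) denotes the largest letter occurring in u (with max of the empty word taken to be 0). -/
/-!
`e_i(u)` is undefined exactly when `u` has an `i`-inversion or contains no `i+1`. So in a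
highest-weight word every letter `j+1` forces a `j`-inversion, hence a letter `j`; descending
from `max(u)` this yields all letters and all inversions. Conversely, the inversions block
`e_i` for `i < max(u)`, and for larger `i` there is no letter `i+1`.
-/

namespace HypoCrystal

theorem replaceFirst_eq_none_iff {a b : ℕ} {u : List ℕ} : replaceFirst a b u = none ↔ a ∉ u := by
  induction u with
  | nil => simp [replaceFirst]
  | cons x xs ih => by_cases h : x = a <;> simp [replaceFirst, h, ih, Ne.symm]

theorem qe_eq_none_iff {i : ℕ} {u : List ℕ} : qe i u = none ↔ HasInv i u ∨ i + 1 ∉ u := by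
  by_cases h : HasInv i u <;> simp [qe, h, replaceFirst_eq_none_iff]

theorem HasInv.mem {i : ℕ} {u : List ℕ} (h : HasInv i u) : i ∈ u := by
  obtain ⟨v, w, x, rfl⟩ := h
  simp

theorem le_maxLetter_of_mem {u : List ℕ} {a : ℕ} (h : a ∈ u) : a ≤ maxLetter u :=
  List.le_max_of_le' 0 h le_rfl

theorem maxLetter_mem {u : List ℕ} (h : maxLetter u ≠ 0) : maxLetter u ∈ u := by
  have hne : u ≠ [] := by rintro rfl; exact h rfl
  exact List.maximum_mem (List.foldr_max_of_ne_nil hne).symm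

theorem HighestWeight.hasInv_of_succ_mem {n i : ℕ} {u : List ℕ} (hw : HighestWeight n u)
    (hu : IsWord n u) (hi : 1 ≤ i) (hmem : i + 1 ∈ u) : HasInv i u :=
  (qe_eq_none_iff.mp (hw i hi (hu _ hmem).2)).resolve_right (not_not.mpr hmem)

theorem HighestWeight.mem_of_le_maxLetter {n j : ℕ} {u : List ℕ} (hw : HighestWeight n u)
    (hu : IsWord n u) (hj : 1 ≤ j) (hjm : j ≤ maxLetter u) : j ∈ u := by
  induction hjm using Nat.decreasingInduction with
  | self => exact maxLetter_mem (by omega)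
  | of_succ k _ ih => exact (hw.hasInv_of_succ_mem hu hj (ih (by omega))).mem

/-- A word `u ∈ 𝒜_n^*` is highest-weight (i.e. `e_i(u)` is undefined
for all `i ∈ {1,…,n−1}`) if and only if `u` contains every symbol of
`{1,…,max(u)}` and `u` has an `i`-inversion for every `i ∈ {1,…,max(u)−1}`, where
`max(u)` is the largest letter of `u` (taken to be `0` for the empty word). -/
theorem highestWeight_characterization (n : ℕ) (u : List ℕ) (hu : IsWord n u) :
    HighestWeight n u ↔
      ((∀ j, 1 ≤ j → j ≤ maxLetter u → j ∈ u) ∧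
       (∀ i, 1 ≤ i → i < maxLetter u → HasInv i u)) := by
  constructor
  · intro hw
    have hmem : ∀ j, 1 ≤ j → j ≤ maxLetter u → j ∈ u := fun j hj hjm =>
      hw.mem_of_le_maxLetter hu hj hjm
    exact ⟨hmem, fun i hi him => hw.hasInv_of_succ_mem hu hi (hmem (i + 1) (by omega) him)⟩
  · rintro ⟨-, hinv⟩ i hi _
    refine qe_eq_none_iff.mpr ?_
    by_cases him : i < maxLetter u
    · exact .inl (hinv i hi him)
    · exact .inr fun hmem => him (le_maxLetter_of_mem hmem)

end HypoCrystal
end
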